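/- Let f be a real polynomial of degree n ≥ 2, let 2 ≤ M ≤ n, and let f_0, ..., f_n and d_0, ..., d_{n-M} be produced by the generalized Euclidean algorithm with step M applied to f. If none of f_0, f_1, ..., f_n is the zero polynomial, then deg f_k = n − k for every k = 0, 1, ..., n, and for every i = 0, 1, ..., n−M the quotient d_i is the monomial d_i(x) = (h_i / h_{i+1}) x, where h_i denotes the leading coefficient of f_i. -/

import Mathlib

open Polynomial

/-- The arithmetic part `f_j` of the polynomial with coefficients `a_0,...,a_n`:
`f_j(x) = Σ_{0 ≤ l ≤ n, l ≡ j (mod M)} a_l x^(n-l)`. -/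
noncomputable def geaInit (a : ℕ → ℝ) (n M j : ℕ) : Polynomial ℝ :=
  ∑ l ∈ Finset.range (n + 1), if l % M = j then C (a l) * X ^ (n - l) else 0

/-- The polynomials `f_0, f_1, ..., f_n` of the generalized Euclidean algorithm with step `M`:
`f_i = d_i f_{i+1} + f_{i+M}` where `d_i = f_i / f_{i+1}` and `f_{i+M} = f_i % f_{i+1}`
(Euclidean division of polynomials). -/
noncomputable def gea (a : ℕ → ℝ) (n M : ℕ) : ℕ → Polynomial ℝ
  | i =>
    if _h : i < M then geaInit a n M i
    else if _h2 : 2 ≤ M then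
      gea a n M (i - M) % gea a n M (i - M + 1)
    else 0
  termination_by i => i
  decreasing_by all_goals omega

/-!
Grade `ℝ[X]` by `ZMod M`, giving `X ^ m` degree `m mod M`. The initial `f_j` is homogeneous of
degree `n - j`, and Euclidean division of homogeneous polynomials has homogeneous quotient and
remainder, so every `f_i` is homogeneous of degree `n - i`. Hence `e_i := deg f_i + i ≡ n (mod M)`.
The remainder step `f_{i+M} = f_i % f_{i+1}` lowers the degree, and a drop by less than `M` inside
a residue class is no increase, so `e_{i+M} ≤ e_{i+1}`; together with `e_i ≤ n` for `i < M` and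
`e_0 = n` this pins `e_i = n`. Then `f_i / f_{i+1}` has degree one and is homogeneous of degree
`1 ≠ 0` in `ZMod M`, so it has no constant term.
-/

namespace Polynomial

section Grading

variable {R : Type*} [Semiring R] {M : ℕ}

def IsHomogeneousMod (M : ℕ) (c : ZMod M) (p : R[X]) : Prop :=
  ∀ m, p.coeff m ≠ 0 → (m : ZMod M) = c

theorem isHomogeneousMod_zero (c : ZMod M) : IsHomogeneousMod M c (0 : R[X]) :=
  fun m hm => absurd (coeff_zero m) hm

theorem IsHomogeneousMod.coeff_eq_zero {c : ZMod M} {p : R[X]} (hp : IsHomogeneousMod M c p)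
    {m : ℕ} (hm : (m : ZMod M) ≠ c) : p.coeff m = 0 :=
  not_imp_comm.mp (hp m) hm

noncomputable def homogeneousComponentMod (M : ℕ) (c : ZMod M) (p : R[X]) : R[X] :=
  ∑ m ∈ p.support.filter (fun m : ℕ => (m : ZMod M) = c), monomial m (p.coeff m)

theorem coeff_homogeneousComponentMod (c : ZMod M) (p : R[X]) (m : ℕ) :
    (homogeneousComponentMod M c p).coeff m = if (m : ZMod M) = c then p.coeff m else 0 := by
  simp only [homogeneousComponentMod, finsetSum_coeff, coeff_monomial, Finset.sum_ite_eq',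
    Finset.mem_filter, mem_support_iff]
  by_cases hm : p.coeff m = 0 <;> simp [hm]

theorem isHomogeneousMod_homogeneousComponentMod (c : ZMod M) (p : R[X]) :
    IsHomogeneousMod M c (homogeneousComponentMod M c p) := by
  intro m hm
  rw [coeff_homogeneousComponentMod] at hm
  by_contra h
  exact hm (if_neg h)

theorem IsHomogeneousMod.homogeneousComponentMod_eq {c : ZMod M} {p : R[X]}
    (hp : IsHomogeneousMod M c p) : homogeneousComponentMod M c p = p := by
  ext m
  rw [coeff_homogeneousComponentMod, ite_eq_left_iff]
  exact fun h => (not_imp_comm.mp (hp m) h).symm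

theorem degree_homogeneousComponentMod_le (c : ZMod M) (p : R[X]) :
    (homogeneousComponentMod M c p).degree ≤ p.degree := by
  refine degree_mono fun m hm => ?_
  rw [mem_support_iff, coeff_homogeneousComponentMod] at hm
  rw [mem_support_iff]
  exact fun h => hm (by rw [h, ite_self])

theorem homogeneousComponentMod_add (c : ZMod M) (p q : R[X]) :
    homogeneousComponentMod M c (p + q) =
      homogeneousComponentMod M c p + homogeneousComponentMod M c q := by
  ext m
  simp only [coeff_homogeneousComponentMod, coeff_add]
  split_ifs <;> simp

theorem homogeneousComponentMod_mul {d : ZMod M} {q : R[X]} (hq : IsHomogeneousMod M d q)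
    (c : ZMod M) (p : R[X]) :
    homogeneousComponentMod M c (p * q) = homogeneousComponentMod M (c - d) p * q := by
  ext k
  simp only [coeff_homogeneousComponentMod, coeff_mul]
  have hterm : ∀ x ∈ Finset.HasAntidiagonal.antidiagonal k,
      (if (x.1 : ZMod M) = c - d then p.coeff x.1 else 0) * q.coeff x.2 =
        if (k : ZMod M) = c then p.coeff x.1 * q.coeff x.2 else 0 := by
    intro x hx
    by_cases hqx : q.coeff x.2 = 0
    · simp [hqx]
    have hk : (k : ZMod M) = x.1 + d := by
      rw [← Finset.HasAntidiagonal.mem_antidiagonal.mp hx, Nat.cast_add, hq _ hqx]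
    simp only [hk, ite_mul, zero_mul, eq_sub_iff_add_eq]
  rw [Finset.sum_congr rfl hterm, Finset.sum_ite_irrel, Finset.sum_const_zero]

end Grading

section Field

variable {K : Type*} [Field K] {M : ℕ}

theorem div_mod_unique {f g q r : K[X]} (h : g * q + r = f) (hr : r.degree < g.degree) :
    f / g = q ∧ f % g = r := by
  have hg : g ≠ 0 := fun h0 => by simp [h0] at hr
  have hdiff : g * (f / g - q) = r - f % g := by
    linear_combination (EuclideanDomain.div_add_mod f g) - h
  have hsmall : (r - f % g).degree < g.degree :=
    (degree_sub_le _ _).trans_lt (max_lt hr (degree_mod_lt f hg))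
  have hq : f / g - q = 0 := by
    by_contra hne
    exact (degree_le_mul_left g hne).not_gt (by rwa [hdiff])
  refine ⟨sub_eq_zero.mp hq, ?_⟩
  rw [hq, mul_zero] at hdiff
  exact (sub_eq_zero.mp hdiff.symm).symm

theorem IsHomogeneousMod.div_mod {c d : ZMod M} {p q : K[X]} (hp : IsHomogeneousMod M c p)
    (hq : IsHomogeneousMod M d q) :
    IsHomogeneousMod M (c - d) (p / q) ∧ IsHomogeneousMod M c (p % q) := by
  rcases eq_or_ne q 0 with rfl | hq0
  · rw [EuclideanDomain.div_zero, EuclideanDomain.mod_zero]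
    exact ⟨isHomogeneousMod_zero _, hp⟩
  -- the homogeneous components of the quotient and remainder form another valid division
  have hsplit :
      q * homogeneousComponentMod M (c - d) (p / q) + homogeneousComponentMod M c (p % q) = p := by
    conv_rhs => rw [← hp.homogeneousComponentMod_eq, ← EuclideanDomain.div_add_mod p q]
    rw [homogeneousComponentMod_add, mul_comm q (p / q), homogeneousComponentMod_mul hq, mul_comm q]
  obtain ⟨hdiv, hmod⟩ := div_mod_unique hsplit
    ((degree_homogeneousComponentMod_le _ _).trans_lt (degree_mod_lt p hq0))
  rw [hdiv, hmod]
  exact ⟨isHomogeneousMod_homogeneousComponentMod _ _,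
    isHomogeneousMod_homogeneousComponentMod _ _⟩

theorem div_eq_C_mul_X {p q : K[X]} (hq : q ≠ 0) (hdeg : p.natDegree = q.natDegree + 1)
    (hcoeff : (p / q).coeff 0 = 0) : p / q = C (p.leadingCoeff / q.leadingCoeff) * X := by
  have hp : p ≠ 0 := fun h => by simp [h] at hdeg
  have hqp : q.degree ≤ p.degree := by
    rw [degree_eq_natDegree hp, degree_eq_natDegree hq]
    exact_mod_cast (by omega : q.natDegree ≤ p.natDegree)
  have hpq0 : p / q ≠ 0 := fun h => ((Polynomial.div_eq_zero_iff hq).mp h).not_ge hqp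
  have hdeg' : (p / q).natDegree = 1 := by
    have := degree_add_div hq hqp
    rw [degree_eq_natDegree hp, degree_eq_natDegree hq, degree_eq_natDegree hpq0] at this
    norm_cast at this
    omega
  rw [eq_X_add_C_of_natDegree_le_one hdeg'.le, hcoeff, C_0, add_zero, ← leadingCoeff_div hqp,
    leadingCoeff, hdeg']

end Field

end Polynomial

section GeneralizedEuclid

variable {a : ℕ → ℝ} {n M : ℕ}

theorem gea_of_lt {i : ℕ} (h : i < M) : gea a n M i = geaInit a n M i := by
  rw [gea, dif_pos h]

theorem gea_add (hM : 2 ≤ M) (i : ℕ) :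
    gea a n M (i + M) = gea a n M i % gea a n M (i + 1) := by
  rw [gea, dif_neg (by omega), dif_pos hM, Nat.add_sub_cancel]

theorem exists_of_coeff_geaInit_ne_zero {j m : ℕ} (hm : (geaInit a n M j).coeff m ≠ 0) :
    ∃ l ≤ n, l % M = j ∧ n - l = m := by
  rw [geaInit, finsetSum_coeff] at hm
  obtain ⟨l, hl, hne⟩ := Finset.exists_ne_zero_of_sum_ne_zero hm
  split_ifs at hne with hlj
  · rw [coeff_C_mul_X_pow] at hne
    split_ifs at hne with hlm
    · exact ⟨l, Nat.lt_succ_iff.mp (Finset.mem_range.mp hl), hlj, hlm.symm⟩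
    · exact absurd rfl hne
  · exact absurd (coeff_zero m) hne

theorem coeff_geaInit_zero : (geaInit a n M 0).coeff n = a 0 := by
  rw [geaInit, finsetSum_coeff, Finset.sum_eq_single 0]
  · simp
  · intro l hl hl0
    have : n - l ≠ n := by
      have := Finset.mem_range.mp hl
      omega
    split_ifs <;> simp [this.symm]
  · simp

theorem isHomogeneousMod_geaInit (j : ℕ) :
    IsHomogeneousMod M ((n : ZMod M) - j) (geaInit a n M j) := by
  intro m hm
  obtain ⟨l, hl, rfl, rfl⟩ := exists_of_coeff_geaInit_ne_zero hm
  rw [Nat.cast_sub hl, ZMod.natCast_mod]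

theorem natDegree_geaInit_le {j : ℕ} (hj : j < M) : (geaInit a n M j).natDegree ≤ n - j := by
  rw [natDegree_le_iff_coeff_eq_zero]
  intro m hm
  by_contra hne
  obtain ⟨l, -, rfl, rfl⟩ := exists_of_coeff_geaInit_ne_zero hne
  have := Nat.mod_le l M
  omega

theorem isHomogeneousMod_gea (hM : 2 ≤ M) (i : ℕ) :
    IsHomogeneousMod M ((n : ZMod M) - i) (gea a n M i) := by
  induction i using Nat.strong_induction_on with
  | _ i ih =>
    rcases lt_or_ge i M with hi | hi
    · rw [gea_of_lt hi]
      exact isHomogeneousMod_geaInit i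
    · obtain ⟨j, rfl⟩ := Nat.exists_eq_add_of_le' hi
      rw [gea_add hM]
      have := ((ih j (by omega)).div_mod (ih (j + 1) (by omega))).2
      rwa [Nat.cast_add, ZMod.natCast_self, add_zero]

theorem natDegree_gea_add_modEq (hM : 2 ≤ M) {i : ℕ} (h : gea a n M i ≠ 0) :
    (gea a n M i).natDegree + i ≡ n [MOD M] := by
  rw [← ZMod.natCast_eq_natCast_iff, Nat.cast_add,
    isHomogeneousMod_gea hM i _ (mt leadingCoeff_eq_zero.mp h), sub_add_cancel]

theorem natDegree_gea_step_add_le (hM : 2 ≤ M) {i : ℕ} (hsucc : gea a n M (i + 1) ≠ 0)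
    (hstep : gea a n M (i + M) ≠ 0) :
    (gea a n M (i + M)).natDegree + (i + M) ≤ (gea a n M (i + 1)).natDegree + (i + 1) := by
  have hlt : (gea a n M (i + M)).natDegree < (gea a n M (i + 1)).natDegree :=
    natDegree_lt_natDegree hstep (by rw [gea_add hM]; exact degree_mod_lt _ hsucc)
  exact Nat.ModEq.le_of_lt_add
    ((natDegree_gea_add_modEq hM hstep).trans (natDegree_gea_add_modEq hM hsucc).symm) (by omega)

theorem natDegree_gea_add_le (hM : 2 ≤ M) (hnz : ∀ i ≤ n, gea a n M i ≠ 0) {i : ℕ}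
    (hi : i ≤ n) : (gea a n M i).natDegree + i ≤ n := by
  induction i using Nat.strong_induction_on with
  | _ i ih =>
    rcases lt_or_ge i M with hiM | hiM
    · have hinit := natDegree_geaInit_le (a := a) (n := n) hiM
      rw [gea_of_lt hiM]
      omega
    · obtain ⟨j, rfl⟩ := Nat.exists_eq_add_of_le' hiM
      have hstep := natDegree_gea_step_add_le hM (hnz (j + 1) (by omega)) (hnz (j + M) hi)
      have hsucc := ih (j + 1) (by omega) (by omega)
      omega

/-- Downward induction on `i`: near the end `i > n - M + 1` the congruence alone forces
`deg f_i + i = n`, and below that the step `i ↦ i + M - 1` transports the bound down. -/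
theorem le_natDegree_gea_add (ha0 : a 0 ≠ 0) (hM : 2 ≤ M) (hnz : ∀ i ≤ n, gea a n M i ≠ 0)
    {i : ℕ} (hi : i ≤ n) : n ≤ (gea a n M i).natDegree + i := by
  induction h : n - i using Nat.strong_induction_on generalizing i with
  | _ k ih =>
    subst h
    rcases Nat.eq_zero_or_pos i with rfl | hi0
    · rw [gea_of_lt (by omega)]
      exact le_natDegree_of_ne_zero (by rwa [coeff_geaInit_zero])
    rcases le_or_gt (i + M) (n + 1) with hiM | hiM
    · obtain ⟨j, rfl⟩ : ∃ j, i = j + 1 := ⟨i - 1, by omega⟩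
      have hstep := natDegree_gea_step_add_le hM (hnz (j + 1) hi) (hnz (j + M) (by omega))
      have hjM := ih (n - (j + M)) (by omega) (by omega) rfl
      omega
    · exact Nat.ModEq.le_of_lt_add (natDegree_gea_add_modEq hM (hnz i hi)).symm (by omega)

theorem natDegree_gea (ha0 : a 0 ≠ 0) (hM : 2 ≤ M) (hnz : ∀ i ≤ n, gea a n M i ≠ 0) {i : ℕ}
    (hi : i ≤ n) : (gea a n M i).natDegree = n - i := by
  have hupper := natDegree_gea_add_le hM hnz hi
  have hlower := le_natDegree_gea_add ha0 hM hnz hi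
  omega

theorem isHomogeneousMod_gea_div (hM : 2 ≤ M) (i : ℕ) :
    IsHomogeneousMod M 1 (gea a n M i / gea a n M (i + 1)) := by
  have hf : ∀ j : ℕ, IsHomogeneousMod M ((n : ZMod M) - j) (gea a n M j) :=
    isHomogeneousMod_gea hM
  have hquot := ((hf i).div_mod (hf (i + 1))).1
  rwa [Nat.cast_add, Nat.cast_one, sub_sub_sub_cancel_left, add_sub_cancel_left] at hquot

end GeneralizedEuclid

theorem gen_euclid_nondegenerate_degrees_and_quotients_general
    (n M : ℕ) (a : ℕ → ℝ) (ha0 : a 0 ≠ 0) (hM : 2 ≤ M) (hMn : M ≤ n)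
    (hnz : ∀ i ≤ n, gea a n M i ≠ 0) :
    (∀ k ≤ n, (gea a n M k).degree = ((n - k : ℕ) : WithBot ℕ)) ∧
    (∀ i ≤ n - M, gea a n M i / gea a n M (i + 1) =
      C ((gea a n M i).leadingCoeff / (gea a n M (i + 1)).leadingCoeff) * X) := by
  refine ⟨fun k hk => by rw [degree_eq_natDegree (hnz k hk), natDegree_gea ha0 hM hnz hk],
    fun i hi => ?_⟩
  have hi1 : i + 1 ≤ n := by omega
  refine div_eq_C_mul_X (hnz _ hi1) ?_ ?_
  · rw [natDegree_gea ha0 hM hnz (by omega), natDegree_gea ha0 hM hnz hi1]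
    omega
  · have : Fact (1 < M) := ⟨hM⟩
    exact (isHomogeneousMod_gea_div hM i).coeff_eq_zero
      (by rw [Nat.cast_zero]; exact zero_ne_one)

/-- In the non-degenerate case of the generalized Euclidean algorithm (none of
`f_0, ..., f_n` is zero), `deg f_k = n - k` and each quotient `d_i = f_i / f_{i+1}` is the
monomial `(h_i / h_{i+1}) x`, where `h_i` is the leading coefficient of `f_i`. -/
theorem gen_euclid_nondegenerate_degrees_and_quotients
    (n M : ℕ) (a : ℕ → ℝ) (hn : 2 ≤ n) (ha0 : a 0 ≠ 0) (hM : 2 ≤ M) (hMn : M ≤ n)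
    (hnz : ∀ i ≤ n, gea a n M i ≠ 0) :
    (∀ k ≤ n, (gea a n M k).degree = ((n - k : ℕ) : WithBot ℕ)) ∧
    (∀ i ≤ n - M, gea a n M i / gea a n M (i + 1) =
      C ((gea a n M i).leadingCoeff / (gea a n M (i + 1)).leadingCoeff) * X) :=
  gen_euclid_nondegenerate_degrees_and_quotients_general n M a ha0 hM hMn hnz
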